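/- Let H : I → ℂ^{m×m} solve the matrix Riccati equation Ḣ(t) + H(t)² = F(t) with F(t) real symmetric, H(t) complex symmetric, and Im H(t₀) positive definite. Then Im H(t) is positive definite for all t ∈ I. -/

import Mathlib

/-!
Write `H = X + iY` with `X`, `Y` real. Since `F` is real, the imaginary part of the Riccati
equation reads `Ẏ = -(XY + YX)`, so by Jacobi's formula `det Y` solves the scalar linear ODE
`g' = -2 tr X · g`. It is positive at `t₀`, hence by uniqueness never zero on `I`. The least value
of `xᵀ Y x` on the unit sphere depends continuously on `t`, is positive at `t₀`, and cannot reach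
`0`, where `Y` would be positive semidefinite and invertible, hence positive definite. By the
intermediate value theorem it stays positive on `I`.
-/

open Matrix Set Metric

theorem eqOn_zero_of_hasDerivAt_eq_mul_self {I : Set ℝ} (hI : I.OrdConnected) {g c : ℝ → ℝ}
    (hg : ∀ t ∈ I, HasDerivAt g (c t * g t) t) (hc : ContinuousOn c I)
    {t₁ : ℝ} (ht₁ : t₁ ∈ I) (hg₁ : g t₁ = 0) : EqOn g 0 I := by
  have lipschitz : ∀ {a b}, a ∈ I → b ∈ I →
      ∃ K, ∀ t ∈ Icc a b, LipschitzOnWith K (fun x => c t * x) univ := by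
    intro a b ha hb
    obtain ⟨C, hC⟩ := isCompact_Icc.exists_bound_of_continuousOn (hc.mono (hI.out ha hb))
    refine ⟨C.toNNReal, fun t ht => ((lipschitzWith_smul (c t)).weaken ?_).lipschitzOnWith⟩
    rw [← NNReal.coe_le_coe, coe_nnnorm, Real.coe_toNNReal']
    exact (hC t ht).trans (le_max_left _ _)
  have hgc : ContinuousOn g I := fun t ht => (hg t ht).continuousAt.continuousWithinAt
  have hzero : ∀ (t : ℝ) (s : Set ℝ), HasDerivWithinAt (fun _ => 0) (c t * 0) s t := fun t s => by
    simpa using hasDerivWithinAt_const t s (0 : ℝ)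
  intro t ht
  rcases le_total t₁ t with h | h
  · obtain ⟨K, hK⟩ := lipschitz ht₁ ht
    exact ODE_solution_unique_of_mem_Icc_right (v := fun t x => c t * x)
      (fun s hs => hK s (Ico_subset_Icc_self hs)) (hgc.mono (hI.out ht₁ ht))
      (fun s hs => (hg s (hI.out ht₁ ht (Ico_subset_Icc_self hs))).hasDerivWithinAt)
      (fun _ _ => mem_univ _) continuousOn_const (fun s _ => hzero s _) (fun _ _ => mem_univ _)
      hg₁ (right_mem_Icc.2 h)
  · obtain ⟨K, hK⟩ := lipschitz ht ht₁
    exact ODE_solution_unique_of_mem_Icc_left (v := fun t x => c t * x)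
      (fun s hs => hK s (Ioc_subset_Icc_self hs)) (hgc.mono (hI.out ht ht₁))
      (fun s hs => (hg s (hI.out ht ht₁ (Ioc_subset_Icc_self hs))).hasDerivWithinAt)
      (fun _ _ => mem_univ _) continuousOn_const (fun s _ => hzero s _) (fun _ _ => mem_univ _)
      hg₁ (left_mem_Icc.2 h)

namespace Matrix

section CommRing

variable {n R : Type*} [Fintype n] [DecidableEq n] [CommRing R]

theorem det_updateRow_eq_sum_mul_adjugate (A : Matrix n n R) (i : n) (b : n → R) :
    (A.updateRow i b).det = ∑ k, b k * adjugate A k i := by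
  rw [← cramer_transpose_apply, cramer_eq_adjugate_mulVec, ← adjugate_transpose]
  simp [mulVec, dotProduct, mul_comm]

theorem trace_add_mul_mul_adjugate (X Y : Matrix n n R) :
    ((X * Y + Y * X) * adjugate Y).trace = 2 * X.trace * Y.det := by
  rw [add_mul, trace_add, Matrix.mul_assoc, mul_adjugate, trace_mul_comm (Y * X),
    ← Matrix.mul_assoc, adjugate_mul]
  simp only [mul_smul_comm, smul_mul_assoc, trace_smul, Matrix.mul_one, Matrix.one_mul,
    smul_eq_mul]
  ring

end CommRing

section Jacobi

variable {𝕜 : Type*} [NontriviallyNormedField 𝕜] {n : Type*} [Fintype n] [DecidableEq n]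

noncomputable def detRowContinuous : ContinuousMultilinearMap 𝕜 (fun _ : n => n → 𝕜) 𝕜 :=
  ⟨(detRowAlternating : (n → 𝕜) [⋀^n]→ₗ[𝕜] 𝕜).toMultilinearMap, continuous_id.matrix_det⟩

theorem hasDerivAt_det {A : 𝕜 → Matrix n n 𝕜} {A' : Matrix n n 𝕜} {t : 𝕜}
    (h : ∀ i j, HasDerivAt (fun s => A s i j) (A' i j) t) :
    HasDerivAt (fun s => (A s).det) (A' * adjugate (A t)).trace t := by
  have hA : HasDerivAt (fun s => of.symm (A s)) (of.symm A') t :=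
    hasDerivAt_pi.2 fun i => hasDerivAt_pi.2 (h i)
  have hdet := (detRowContinuous.hasFDerivAt (of.symm (A t))).comp_hasDerivAt t hA
  -- `det` is multilinear in the rows, so its derivative differentiates one row at a time.
  have hlinearDeriv : detRowContinuous.linearDeriv (of.symm (A t)) (of.symm A') =
      ∑ i, ((A t).updateRow i (A' i)).det := by
    rw [ContinuousMultilinearMap.linearDeriv_apply]
    rfl
  have htrace : (A' * adjugate (A t)).trace = ∑ i, ((A t).updateRow i (A' i)).det := by
    simp [trace, mul_apply, det_updateRow_eq_sum_mul_adjugate]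
  rw [htrace, ← hlinearDeriv]
  exact hdet

end Jacobi

theorem map_im_mul {l m n : Type*} [Fintype m] (A : Matrix l m ℂ) (B : Matrix m n ℂ) :
    (A * B).map Complex.im =
      A.map Complex.re * B.map Complex.im + A.map Complex.im * B.map Complex.re := by
  ext i j
  simp [mul_apply, Complex.im_sum, Finset.sum_add_distrib]

section quadMin

variable {n : Type*} [Fintype n]

-- The sphere is for the sup norm of `n → ℝ`; only its compactness and scaling are used.
noncomputable def quadMin (M : Matrix n n ℝ) : ℝ :=
  sInf ((fun x => x ⬝ᵥ M *ᵥ x) '' sphere 0 1)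

theorem continuous_quadMin : Continuous (quadMin : Matrix n n ℝ → ℝ) :=
  (isCompact_sphere 0 1).continuous_sInf (f := fun M x => x ⬝ᵥ M *ᵥ x) (by fun_prop)

theorem quadMin_le {M : Matrix n n ℝ} {x : n → ℝ} (hx : x ∈ sphere 0 1) :
    quadMin M ≤ x ⬝ᵥ M *ᵥ x :=
  csInf_le ((isCompact_sphere 0 1).bddBelow_image (by fun_prop)) (mem_image_of_mem _ hx)

theorem exists_quadMin_eq [Nonempty n] (M : Matrix n n ℝ) :
    ∃ x ∈ sphere (0 : n → ℝ) 1, x ⬝ᵥ M *ᵥ x = quadMin M :=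
  ((isCompact_sphere 0 1).image (f := fun x => x ⬝ᵥ M *ᵥ x) (by fun_prop)).sInf_mem
    ((NormedSpace.sphere_nonempty.2 zero_le_one).image _)

theorem quadMin_mul_norm_sq_le (M : Matrix n n ℝ) (x : n → ℝ) :
    quadMin M * ‖x‖ ^ 2 ≤ x ⬝ᵥ M *ᵥ x := by
  rcases eq_or_ne x 0 with rfl | hx
  · simp
  have hnorm : 0 < ‖x‖ := norm_pos_iff.2 hx
  have hunit : ‖x‖⁻¹ • x ∈ sphere (0 : n → ℝ) 1 := by
    simp [norm_smul, hnorm.ne']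
  have hscale : x ⬝ᵥ M *ᵥ x = ‖x‖ ^ 2 * ((‖x‖⁻¹ • x) ⬝ᵥ M *ᵥ (‖x‖⁻¹ • x)) := by
    simp only [mulVec_smul, smul_dotProduct, dotProduct_smul, smul_eq_mul]
    field_simp
  rw [hscale, mul_comm]
  exact mul_le_mul_of_nonneg_left (quadMin_le hunit) (by positivity)

theorem PosDef.quadMin_pos [Nonempty n] {M : Matrix n n ℝ} (hM : M.PosDef) : 0 < quadMin M := by
  obtain ⟨x, hx, hmin⟩ := exists_quadMin_eq M
  have hx0 : x ≠ 0 := by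
    rintro rfl
    simp at hx
  simpa [← hmin] using hM.dotProduct_mulVec_pos hx0

theorem IsHermitian.posSemidef_of_quadMin_nonneg {M : Matrix n n ℝ} (hM : M.IsHermitian)
    (h : 0 ≤ quadMin M) : M.PosSemidef :=
  .of_dotProduct_mulVec_nonneg hM fun x => by
    simpa using (mul_nonneg h (sq_nonneg ‖x‖)).trans (quadMin_mul_norm_sq_le M x)

theorem IsHermitian.posDef_of_quadMin_pos {M : Matrix n n ℝ} (hM : M.IsHermitian)
    (h : 0 < quadMin M) : M.PosDef :=
  .of_dotProduct_mulVec_pos hM fun x hx => by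
    simpa using (mul_pos h (by positivity : 0 < ‖x‖ ^ 2)).trans_le (quadMin_mul_norm_sq_le M x)

end quadMin

end Matrix

theorem IsPreconnected.posDef_of_det_ne_zero {α n : Type*} [TopologicalSpace α] [Fintype n]
    [DecidableEq n] {S : Set α} (hS : IsPreconnected S) {Y : α → Matrix n n ℝ}
    (hY : ContinuousOn Y S)
    (hherm : ∀ t ∈ S, (Y t).IsHermitian) (hdet : ∀ t ∈ S, (Y t).det ≠ 0)
    {t₀ : α} (ht₀ : t₀ ∈ S) (hpos : (Y t₀).PosDef) : ∀ t ∈ S, (Y t).PosDef := by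
  cases isEmpty_or_nonempty n
  · exact fun t ht => .of_dotProduct_mulVec_pos (hherm t ht) fun x hx =>
      (hx (Subsingleton.elim _ _)).elim
  have quadMin_ne_zero : ∀ t ∈ S, quadMin (Y t) ≠ 0 := fun t ht h0 =>
    have hpd := ((hherm t ht).posSemidef_of_quadMin_nonneg h0.ge).posDef_iff_det_ne_zero.2
      (hdet t ht)
    hpd.quadMin_pos.ne' h0
  intro t ht
  refine (hherm t ht).posDef_of_quadMin_pos (not_le.1 fun hle => ?_)
  obtain ⟨s, hs, h0⟩ := hS.intermediate_value ht ht₀ (continuous_quadMin.comp_continuousOn hY)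
    ⟨hle, hpos.quadMin_pos.le⟩
  exact quadMin_ne_zero s hs h0

theorem stmt8_general (m : ℕ) (I : Set ℝ) (hI : I.OrdConnected)
    (H H' : ℝ → Matrix (Fin m) (Fin m) ℂ)
    (F : ℝ → Matrix (Fin m) (Fin m) ℝ)
    (hderiv : ∀ t ∈ I, ∀ i j, HasDerivAt (fun s => H s i j) (H' t i j) t)
    (hric : ∀ t ∈ I, H' t + H t * H t = (F t).map (fun a => (a : ℂ)))
    (hHsymm : ∀ t ∈ I, (H t).IsSymm)
    (t₀ : ℝ) (ht₀ : t₀ ∈ I)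
    (hpos : ((H t₀).map Complex.im).PosDef) :
    ∀ t ∈ I, ((H t).map Complex.im).PosDef := by
  set X : ℝ → Matrix (Fin m) (Fin m) ℝ := fun t => (H t).map Complex.re
  set Y : ℝ → Matrix (Fin m) (Fin m) ℝ := fun t => (H t).map Complex.im
  have hYderiv : ∀ t ∈ I, ∀ i j, HasDerivAt (fun s => Y s i j) ((H' t).map Complex.im i j) t :=
    fun t ht i j => Complex.imCLM.hasFDerivAt.comp_hasDerivAt t (hderiv t ht i j)
  have hYdot : ∀ t ∈ I, (H' t).map Complex.im = -(X t * Y t + Y t * X t) := by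
    intro t ht
    rw [← map_im_mul, eq_sub_of_add_eq (hric t ht)]
    ext i j
    simp
  have hdet : ∀ t ∈ I, HasDerivAt (fun s => (Y s).det) (-2 * (X t).trace * (Y t).det) t := by
    intro t ht
    have htrace : ((H' t).map Complex.im * adjugate (Y t)).trace =
        -2 * (X t).trace * (Y t).det := by
      rw [hYdot t ht, neg_mul, trace_neg, trace_add_mul_mul_adjugate]
      ring
    rw [← htrace]
    exact hasDerivAt_det (hYderiv t ht)
  have hcont : ∀ f : ℂ → ℝ, Continuous f → ContinuousOn (fun t => (H t).map f) I :=
    fun f hf => continuousOn_pi.2 fun i => continuousOn_pi.2 fun j =>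
      hf.comp_continuousOn fun t ht => (hderiv t ht i j).continuousAt.continuousWithinAt
  have hdet_ne : ∀ t ∈ I, (Y t).det ≠ 0 := fun t ht h0 =>
    hpos.det_pos.ne' (eqOn_zero_of_hasDerivAt_eq_mul_self hI hdet
      (continuousOn_const.mul (continuous_id.matrix_trace.comp_continuousOn
        (hcont _ Complex.continuous_re))) ht h0 ht₀)
  exact hI.isPreconnected.posDef_of_det_ne_zero (hcont _ Complex.continuous_im)
    (fun t ht => isHermitian_iff_isSymm.2 ((hHsymm t ht).map _)) hdet_ne ht₀ hpos

/-- For a `C¹` family of complex symmetric matrices solving the matrix Riccati equation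
`Ḣ + H² = F` with `F` real symmetric and `Im H(t₀)` positive definite, `Im H(t)` is
positive definite for all `t ∈ I`. -/
theorem stmt8 (m : ℕ) (I : Set ℝ) (hI : I.OrdConnected)
    (H H' : ℝ → Matrix (Fin m) (Fin m) ℂ)
    (F : ℝ → Matrix (Fin m) (Fin m) ℝ)
    (hderiv : ∀ t ∈ I, ∀ i j, HasDerivAt (fun s => H s i j) (H' t i j) t)
    (hcont : ∀ i j, ContinuousOn (fun s => H' s i j) I)
    (hric : ∀ t ∈ I, H' t + H t * H t = (F t).map (fun a => (a : ℂ)))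
    (hFsymm : ∀ t ∈ I, (F t).IsSymm)
    (hHsymm : ∀ t ∈ I, (H t).IsSymm)
    (t₀ : ℝ) (ht₀ : t₀ ∈ I)
    (hpos : ((H t₀).map Complex.im).PosDef) :
    ∀ t ∈ I, ((H t).map Complex.im).PosDef :=
  stmt8_general m I hI H H' F hderiv hric hHsymm t₀ ht₀ hpos
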